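/- Fuchs–van de Graaf and Bures–trace relations: for any two density matrices ρ, σ, with fidelity F(ρ,σ) = ‖√ρ √σ‖₁ and trace distance Δ(ρ,σ) = ‖ρ−σ‖₁/2 and Bures metric Δ_B(ρ,σ) = √(1 − F(ρ,σ)), it holds that 1 − F(ρ,σ) ≤ Δ(ρ,σ) ≤ √(1 − F(ρ,σ)²) and Δ_B(ρ,σ)² ≤ Δ(ρ,σ) ≤ √2 · Δ_B(ρ,σ). -/

import Mathlib

open Matrix
open scoped ComplexOrder

/-- The positive semidefinite square root of a positive semidefinite matrix
(the definition `Matrix.PosSemidef.sqrt` of the older Mathlib, since removed). -/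
noncomputable def Matrix.PosSemidef.sqrt {n 𝕜 : Type*} [Fintype n] [RCLike 𝕜] [DecidableEq n]
    {A : Matrix n n 𝕜} (hA : A.PosSemidef) : Matrix n n 𝕜 :=
  hA.1.eigenvectorUnitary.1 * diagonal ((↑) ∘ (Real.sqrt ∘ hA.1.eigenvalues)) *
  (star hA.1.eigenvectorUnitary : Matrix n n 𝕜)

/-- Trace norm (Schatten 1-norm): `‖A‖₁ = Tr √(Aᴴ A)`. -/
noncomputable def traceNorm {n : Type*} [Fintype n] [DecidableEq n]
    (A : Matrix n n ℂ) : ℝ :=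
  ((Matrix.posSemidef_conjTranspose_mul_self A).sqrt).trace.re

/-!
Write `F = ‖√ρ √σ‖₁` and `D = ‖ρ - σ‖₁`. Both trace-norm estimates rest on the polar
decomposition `M = U √(Mᴴ M)` and on Cauchy–Schwarz for `(X, Y) ↦ Tr (Xᴴ G Y)`, `G ≥ 0`.

The lower bound `2 - 2F ≤ D` is the Powers–Størmer inequality `Tr (A - B)² ≤ ‖A² - B²‖₁`
for `A = √ρ`, `B = √σ`, together with `Re Tr (√ρ √σ) ≤ F`. For the upper bound, measure both
states with the projection `P` onto the positive part of `ρ - σ`: the outcome probabilities `p, q`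
satisfy `p - q = D / 2`, fidelity can only grow under the measurement, so
`F ≤ √(p q) + √((1 - p)(1 - q))`, and the square of this classical fidelity is at most
`1 - (p - q)²`. The Bures inequalities follow from `1 - F² ≤ 2 (1 - F)`.
-/

namespace Matrix

variable {n : Type*} [Fintype n]

theorem star_mulVec_dotProduct_mulVec (M : Matrix n n ℂ) (x y : n → ℂ) :
    star (M *ᵥ x) ⬝ᵥ (M *ᵥ y) = star x ⬝ᵥ ((Mᴴ * M) *ᵥ y) := by
  rw [star_mulVec, dotProduct_mulVec, vecMul_vecMul, ← dotProduct_mulVec]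

theorem norm_trace_conjTranspose_mul_mul_le {G : Matrix n n ℂ} (hG : G.PosSemidef)
    (X Y : Matrix n n ℂ) :
    ‖(Xᴴ * G * Y).trace‖ ≤ √(Xᴴ * G * X).trace.re * √(Yᴴ * G * Y).trace.re := by
  let _ := G.toMatrixSeminormedAddCommGroup hG
  let _ := G.toMatrixInnerProductSpace hG
  have inner_eq : ∀ A B : Matrix n n ℂ, inner ℂ Aᴴ Bᴴ = (Bᴴ * G * A).trace := fun A B => by
    conv_rhs => rw [← conjTranspose_conjTranspose A]
    rfl
  have norm_eq : ∀ A : Matrix n n ℂ, ‖Aᴴ‖ = √(Aᴴ * G * A).trace.re := fun A => by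
    rw [norm_eq_sqrt_re_inner (𝕜 := ℂ), inner_eq]; rfl
  rw [mul_comm]
  simpa only [inner_eq, norm_eq] using norm_inner_le_norm (𝕜 := ℂ) Yᴴ Xᴴ

variable [DecidableEq n]

open scoped MatrixOrder in
theorem posSemidef_cfc (X : Matrix n n ℂ) {f : ℝ → ℝ} (hf : ∀ x, 0 ≤ f x) :
    (cfc f X).PosSemidef :=
  (cfc_nonneg fun x _ => hf x).posSemidef

open scoped MatrixOrder in
theorem PosSemidef.nonneg_of_mem_spectrum {A : Matrix n n ℂ} (hA : A.PosSemidef) {x : ℝ}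
    (hx : x ∈ spectrum ℝ A) : 0 ≤ x :=
  spectrum_nonneg_of_nonneg hA.nonneg hx

namespace PosSemidef

variable {A B : Matrix n n ℂ}

theorem sqrt_eq_cfc (hA : A.PosSemidef) : hA.sqrt = cfc Real.sqrt A := by
  rw [hA.1.cfc_eq]
  simp only [PosSemidef.sqrt, IsHermitian.cfc, Unitary.conjStarAlgAut_apply]

theorem posSemidef_sqrt (hA : A.PosSemidef) : hA.sqrt.PosSemidef :=
  hA.sqrt_eq_cfc ▸ posSemidef_cfc A fun _ => Real.sqrt_nonneg _

theorem sqrt_mul_self (hA : A.PosSemidef) : hA.sqrt * hA.sqrt = A := by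
  rw [sqrt_eq_cfc, ← cfc_mul _ _ A]
  conv_rhs => rw [← cfc_id' ℝ A hA.1.isSelfAdjoint]
  exact cfc_congr fun x hx => Real.mul_self_sqrt (hA.nonneg_of_mem_spectrum hx)

theorem eq_sqrt_of_mul_self_eq (hA : A.PosSemidef) (hB : B.PosSemidef) (h : B * B = A) :
    B = hA.sqrt := by
  rw [sqrt_eq_cfc, ← h, ← sq]
  calc B = cfc (fun x : ℝ => x) B := (cfc_id' ℝ B hB.1.isSelfAdjoint).symm
    _ = cfc (fun x : ℝ => √(x ^ 2)) B :=
      cfc_congr fun x hx => (Real.sqrt_sq (hB.nonneg_of_mem_spectrum hx)).symm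
    _ = cfc Real.sqrt (B ^ 2) :=
      cfc_comp_pow Real.sqrt 2 B Real.continuous_sqrt.continuousOn hB.1.isSelfAdjoint

theorem trace_mul_nonneg (hA : A.PosSemidef) (hB : B.PosSemidef) : 0 ≤ (A * B).trace := by
  have h := (hA.conjTranspose_mul_mul_same hB.sqrt).trace_nonneg
  rwa [hB.posSemidef_sqrt.1.eq, trace_mul_cycle, hB.sqrt_mul_self, trace_mul_comm] at h

theorem trace_sqrt_conjTranspose_mul_mul_sqrt (hA : A.PosSemidef) (E : Matrix n n ℂ) :
    (hA.sqrtᴴ * E * hA.sqrt).trace = (E * A).trace := by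
  rw [hA.posSemidef_sqrt.1.eq, trace_mul_cycle, hA.sqrt_mul_self, trace_mul_comm]

end PosSemidef

theorem IsHermitian.star_eigenvectorBasis_dotProduct {H : Matrix n n ℂ} (hH : H.IsHermitian)
    (i j : n) :
    star ⇑(hH.eigenvectorBasis i) ⬝ᵥ ⇑(hH.eigenvectorBasis j) = if i = j then 1 else 0 := by
  rw [dotProduct_comm, ← EuclideanSpace.inner_eq_star_dotProduct,
    orthonormal_iff_ite.mp hH.eigenvectorBasis.orthonormal]

theorem IsHermitian.star_mulVec_eigenvectorBasis_dotProduct {M : Matrix n n ℂ}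
    (hH : (Mᴴ * M).IsHermitian) (i j : n) :
    star (M *ᵥ ⇑(hH.eigenvectorBasis i)) ⬝ᵥ (M *ᵥ ⇑(hH.eigenvectorBasis j)) =
      if i = j then (hH.eigenvalues i : ℂ) else 0 := by
  rw [star_mulVec_dotProduct_mulVec, hH.mulVec_eigenvectorBasis, dotProduct_smul,
    hH.star_eigenvectorBasis_dotProduct]
  split_ifs with h <;> simp [h, Complex.real_smul]

theorem IsHermitian.exists_orthonormalBasis_mulVec_eigenvectorBasis {M : Matrix n n ℂ}
    (hH : (Mᴴ * M).IsHermitian) :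
    ∃ b : OrthonormalBasis n ℂ (EuclideanSpace ℂ n),
      ∀ i, M *ᵥ ⇑(hH.eigenvectorBasis i) = (√(hH.eigenvalues i) : ℂ) • ⇑(b i) := by
  set s : n → ℝ := fun i => √(hH.eigenvalues i)
  have hs : ∀ i, (s i : ℂ) * s i = hH.eigenvalues i := fun i => by
    rw [← Complex.ofReal_mul, Real.mul_self_sqrt (eigenvalues_conjTranspose_mul_self_nonneg M i)]
  let u : n → EuclideanSpace ℂ n :=
    fun i => WithLp.toLp 2 ((s i : ℂ)⁻¹ • (M *ᵥ ⇑(hH.eigenvectorBasis i)))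
  have hu : Orthonormal ℂ ({i | s i ≠ 0}.domRestrict u) := by
    rw [orthonormal_iff_ite]
    rintro ⟨i, hi⟩ ⟨j, hj⟩
    simp only [Set.domRestrict_apply, u, EuclideanSpace.inner_toLp_toLp, star_smul,
      dotProduct_smul, dotProduct_comm _ (star _), hH.star_mulVec_eigenvectorBasis_dotProduct,
      Subtype.mk.injEq]
    split_ifs with hij
    · subst hij
      simp only [Set.mem_ofPred_eq] at hi
      rw [← hs]
      simp [hi]
    · simp
  obtain ⟨b, hb⟩ := hu.exists_orthonormalBasis_extension_of_card_eq finrank_euclideanSpace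
  refine ⟨b, fun i => ?_⟩
  by_cases hsi : s i = 0
  · have h0 : M *ᵥ ⇑(hH.eigenvectorBasis i) = 0 := by
      rw [← dotProduct_star_self_eq_zero, hH.star_mulVec_eigenvectorBasis_dotProduct,
        if_pos rfl, ← hs, hsi, Complex.ofReal_zero, mul_zero]
    simp only [s] at hsi
    rw [h0, hsi, Complex.ofReal_zero, zero_smul]
  · rw [hb i hsi]
    simp only [u, smul_smul]
    rw [mul_inv_cancel₀ (by exact_mod_cast hsi), one_smul]

theorem exists_unitary_mul_sqrt (M : Matrix n n ℂ) :
    ∃ U ∈ unitaryGroup n ℂ, M = U * (posSemidef_conjTranspose_mul_self M).sqrt := by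
  set hH := (posSemidef_conjTranspose_mul_self M).1
  obtain ⟨b, hb⟩ := hH.exists_orthonormalBasis_mulVec_eigenvectorBasis
  set Ub := (EuclideanSpace.basisFun n ℂ).toBasis.toMatrix b.toBasis
  set V : Matrix n n ℂ := (hH.eigenvectorUnitary : Matrix n n ℂ)
  set D := diagonal (fun i => (√(hH.eigenvalues i) : ℂ))
  have hV : star V * V = 1 := Unitary.coe_star_mul_self hH.eigenvectorUnitary
  have hV' : V * star V = 1 := Unitary.coe_mul_star_self hH.eigenvectorUnitary
  have hcol : M * V = Ub * D := by
    ext j i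
    have h := congrFun (hb i) j
    simp only [mulVec, dotProduct, Pi.smul_apply, smul_eq_mul] at h
    rw [mul_diagonal]
    simp only [mul_apply, V, IsHermitian.eigenvectorUnitary_apply, h]
    exact mul_comm _ _
  refine ⟨Ub * star V, mul_mem
    ((EuclideanSpace.basisFun n ℂ).toMatrix_orthonormalBasis_mem_unitary b)
    (star hH.eigenvectorUnitary).2, ?_⟩
  calc M = M * V * star V := by rw [Matrix.mul_assoc, hV', Matrix.mul_one]
    _ = Ub * star V * (V * D * star V) := by
      simp only [hcol, Matrix.mul_assoc]
      rw [← Matrix.mul_assoc (star V) V, hV, Matrix.one_mul]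

theorem re_trace_unitary_mul_conjTranspose_mul_mul_le {U : Matrix n n ℂ}
    (hU : U ∈ unitaryGroup n ℂ) (A B : Matrix n n ℂ) {E : Matrix n n ℂ} (hE : E.PosSemidef) :
    (U * (Aᴴ * E * B)).trace.re ≤ √(Aᴴ * E * A).trace.re * √(Bᴴ * E * B).trace.re := by
  have hUA : (A * star U)ᴴ = U * Aᴴ := by
    rw [conjTranspose_mul, ← star_eq_conjTranspose, star_star]
  have hconj : ((A * star U)ᴴ * E * (A * star U)).trace = (Aᴴ * E * A).trace := by
    rw [hUA, Matrix.mul_assoc U, Matrix.mul_assoc U, trace_mul_comm]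
    simp only [Matrix.mul_assoc, (mem_unitaryGroup_iff').mp hU, Matrix.mul_one]
  calc (U * (Aᴴ * E * B)).trace.re = ((A * star U)ᴴ * E * B).trace.re := by
        rw [hUA]; simp only [Matrix.mul_assoc]
    _ ≤ ‖((A * star U)ᴴ * E * B).trace‖ := Complex.re_le_norm _
    _ ≤ _ := hconj ▸ norm_trace_conjTranspose_mul_mul_le hE _ _

theorem IsHermitian.exists_projection_posSemidef_mul {X : Matrix n n ℂ} (hX : X.IsHermitian) :
    ∃ P : Matrix n n ℂ, P.IsHermitian ∧ P * P = P ∧ Commute P X ∧ (P * X).PosSemidef ∧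
      ((P - 1) * X).PosSemidef := by
  set g : ℝ → ℝ := fun x => if 0 < x then 1 else 0
  have hc : ∀ f : ℝ → ℝ, ContinuousOn f (spectrum ℝ X) := fun f =>
    X.finite_real_spectrum.continuousOn f
  have hmulX : ∀ f : ℝ → ℝ, cfc f X * X = cfc (fun x => f x * x) X := fun f => by
    nth_rw 2 [← cfc_id' ℝ X hX.isSelfAdjoint]
    exact (cfc_mul f _ X (hc _) (hc _)).symm
  refine ⟨cfc g X, (cfc_predicate g X).isHermitian, ?_, ?_, ?_, ?_⟩
  · rw [← cfc_mul g g X (hc _) (hc _)]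
    congr 1; ext x; simp [g]
  · simpa only [cfc_id' ℝ X hX.isSelfAdjoint] using cfc_commute_cfc g (fun x => x) X
  · rw [hmulX]
    exact posSemidef_cfc X fun x => by simp only [g]; split_ifs with h <;> linarith
  · rw [← cfc_const_one ℝ X, ← cfc_sub g _ X (hc _) (hc _), hmulX]
    exact posSemidef_cfc X fun x => by simp only [g]; split_ifs with h <;> linarith

theorem two_smul_sub_one_mul_self {P : Matrix n n ℂ} (hPP : P * P = P) :
    (2 • P - 1) * (2 • P - 1) = 1 :=
  calc (2 • P - 1) * (2 • P - 1) = 4 • (P * P - P) + 1 := by noncomm_ring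
    _ = 1 := by rw [hPP, sub_self, smul_zero, zero_add]

theorem mem_unitaryGroup_two_smul_sub_one {P : Matrix n n ℂ} (hP : P.IsHermitian)
    (hPP : P * P = P) : 2 • P - 1 ∈ unitaryGroup n ℂ := by
  have hstar : star (2 • P - 1) = 2 • P - 1 := by
    rw [star_sub, star_nsmul, star_one, star_eq_conjTranspose, hP.eq]
  rw [mem_unitaryGroup_iff', hstar, two_smul_sub_one_mul_self hPP]

end Matrix

section TraceNorm

variable {n : Type*} [Fintype n] [DecidableEq n]

theorem traceNorm_nonneg (M : Matrix n n ℂ) : 0 ≤ traceNorm M :=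
  (Complex.nonneg_iff.mp (posSemidef_conjTranspose_mul_self M).posSemidef_sqrt.trace_nonneg).1

theorem traceNorm_eq_of_mul_self_eq {M S : Matrix n n ℂ} (hS : S.PosSemidef)
    (h : S * S = Mᴴ * M) : traceNorm M = S.trace.re := by
  rw [traceNorm, ← (posSemidef_conjTranspose_mul_self M).eq_sqrt_of_mul_self_eq hS h]

theorem exists_unitary_re_trace_mul_eq_traceNorm (M : Matrix n n ℂ) :
    ∃ U ∈ unitaryGroup n ℂ, (U * M).trace.re = traceNorm M := by
  obtain ⟨V, hV, hM⟩ := exists_unitary_mul_sqrt M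
  refine ⟨star V, Unitary.star_mem hV, ?_⟩
  rw [traceNorm]
  nth_rw 1 [hM]
  rw [← Matrix.mul_assoc, (mem_unitaryGroup_iff').mp hV, Matrix.one_mul]

theorem re_trace_unitary_mul_le_traceNorm {U : Matrix n n ℂ} (hU : U ∈ unitaryGroup n ℂ)
    (M : Matrix n n ℂ) : (U * M).trace.re ≤ traceNorm M := by
  obtain ⟨V, hV, hM⟩ := exists_unitary_mul_sqrt M
  set S := (posSemidef_conjTranspose_mul_self M).sqrt
  have hS : S.PosSemidef := (posSemidef_conjTranspose_mul_self M).posSemidef_sqrt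
  have hVS : (star V)ᴴ * S * 1 = M := by
    rw [Matrix.mul_one, ← star_eq_conjTranspose, star_star, hM]
  have hconj : ((star V)ᴴ * S * star V).trace = S.trace := by
    rw [trace_mul_cycle, ← star_eq_conjTranspose, star_star, (mem_unitaryGroup_iff').mp hV,
      Matrix.one_mul]
  have h := re_trace_unitary_mul_conjTranspose_mul_mul_le hU (star V) 1 hS
  rwa [hVS, hconj, conjTranspose_one, Matrix.one_mul, Matrix.mul_one,
    Real.mul_self_sqrt (Complex.nonneg_iff.mp hS.trace_nonneg).1] at h

theorem traceNorm_conjTranspose_mul_le {A B E F : Matrix n n ℂ} (hE : E.PosSemidef)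
    (hF : F.PosSemidef) (hEF : E + F = 1) :
    traceNorm (Aᴴ * B) ≤ √(Aᴴ * E * A).trace.re * √(Bᴴ * E * B).trace.re +
      √(Aᴴ * F * A).trace.re * √(Bᴴ * F * B).trace.re := by
  obtain ⟨U, hU, hUM⟩ := exists_unitary_re_trace_mul_eq_traceNorm (Aᴴ * B)
  have hsplit : Aᴴ * B = Aᴴ * E * B + Aᴴ * F * B := by
    rw [← Matrix.add_mul, ← Matrix.mul_add, hEF, Matrix.mul_one]
  rw [← hUM, hsplit, Matrix.mul_add, trace_add, Complex.add_re]
  exact add_le_add (re_trace_unitary_mul_conjTranspose_mul_mul_le hU A B hE)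
    (re_trace_unitary_mul_conjTranspose_mul_mul_le hU A B hF)

theorem re_trace_sub_mul_sub_le_traceNorm {A B : Matrix n n ℂ} (hA : A.PosSemidef)
    (hB : B.PosSemidef) : ((A - B) * (A - B)).trace.re ≤ traceNorm (A * A - B * B) := by
  obtain ⟨P, hP, hPP, hPX, hpos, hneg⟩ := (hA.1.sub hB.1).exists_projection_posSemidef_mul
  set X := A - B
  -- `W` is the sign of `X`: `W * X = P * X + (P - 1) * X = |X|`.
  set W : Matrix n n ℂ := 2 • P - 1
  have hWX : W * X = X * W := ((hPX.smul_left 2).sub_left (Commute.one_left X)).eq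
  have hsym : (W * (A * A - B * B)).trace = (W * X * (A + B)).trace := by
    have h : W * (A * A - B * B) + W * (A * A - B * B) = W * X * (A + B) + W * (A + B) * X := by
      simp only [X]; noncomm_ring
    have hcyc : (W * (A + B) * X).trace = (W * X * (A + B)).trace := by
      rw [trace_mul_cycle, ← hWX]
    have h' := congrArg trace h
    rw [trace_add, trace_add, hcyc] at h'
    linear_combination h' / 2
  have hsplit : W * X * (A + B) = X * X + 2 • (P * X * B) + 2 • ((P - 1) * X * A) := by
    simp only [W, X]; noncomm_ring
  calc (X * X).trace.re
      ≤ (X * X).trace.re + 2 * (P * X * B).trace.re + 2 * ((P - 1) * X * A).trace.re := by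
        have h1 := (Complex.nonneg_iff.mp (hpos.trace_mul_nonneg hB)).1
        have h2 := (Complex.nonneg_iff.mp (hneg.trace_mul_nonneg hA)).1
        linarith
    _ = (W * (A * A - B * B)).trace.re := by
        rw [hsym, hsplit, trace_add, trace_add, trace_smul, trace_smul]
        simp
    _ ≤ traceNorm (A * A - B * B) :=
        re_trace_unitary_mul_le_traceNorm (mem_unitaryGroup_two_smul_sub_one hP hPP) _

theorem exists_projection_re_trace_mul_sub_eq {ρ σ : Matrix n n ℂ} (hρ : ρ.IsHermitian)
    (hσ : σ.IsHermitian) (htr : ρ.trace = σ.trace) :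
    ∃ P : Matrix n n ℂ, P.PosSemidef ∧ (1 - P).PosSemidef ∧
      (P * ρ).trace.re - (P * σ).trace.re = traceNorm (ρ - σ) / 2 := by
  obtain ⟨P, hP, hPP, hPX, hpos, hneg⟩ := (hρ.sub hσ).exists_projection_posSemidef_mul
  set X := ρ - σ
  have habs : P * X + (P - 1) * X = (2 • P - 1) * X := by noncomm_ring
  have hsq : (P * X + (P - 1) * X) * (P * X + (P - 1) * X) = Xᴴ * X := by
    have hWX : (2 • P - 1) * X = X * (2 • P - 1) :=
      ((hPX.smul_left 2).sub_left (Commute.one_left X)).eq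
    rw [habs, (hρ.sub hσ).eq, Matrix.mul_assoc, ← Matrix.mul_assoc X, ← hWX, ← Matrix.mul_assoc,
      ← Matrix.mul_assoc, two_smul_sub_one_mul_self hPP, Matrix.one_mul]
  have hnorm := traceNorm_eq_of_mul_self_eq (hpos.add hneg) hsq
  have htrX : X.trace = 0 := by rw [trace_sub, htr, sub_self]
  refine ⟨P, ?_, ?_, ?_⟩
  · simpa only [hP.eq, hPP] using posSemidef_conjTranspose_mul_self P
  · have h := posSemidef_conjTranspose_mul_self (1 - P)
    rwa [conjTranspose_sub, conjTranspose_one, hP.eq,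
      show (1 - P) * (1 - P) = 1 - P by noncomm_ring; rw [hPP]; abel] at h
  · rw [hnorm, ← Complex.sub_re, ← trace_sub, ← Matrix.mul_sub, trace_add, Matrix.sub_mul,
      trace_sub, Matrix.one_mul, htrX]
    simp only [Complex.add_re, Complex.sub_re, Complex.zero_re]
    ring

end TraceNorm

theorem sq_sqrt_mul_sqrt_add_sqrt_mul_sqrt_le {p q : ℝ} (hp₀ : 0 ≤ p) (hp₁ : p ≤ 1)
    (hq₀ : 0 ≤ q) (hq₁ : q ≤ 1) :
    (√p * √q + √(1 - p) * √(1 - q)) ^ 2 ≤ 1 - (p - q) ^ 2 := by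
  have ha := Real.sq_sqrt hp₀
  have hb := Real.sq_sqrt hq₀
  have hc := Real.sq_sqrt (sub_nonneg.mpr hp₁)
  have hd := Real.sq_sqrt (sub_nonneg.mpr hq₁)
  -- AM-GM: `2 √(p (1 - p)) √(q (1 - q)) ≤ p (1 - p) + q (1 - q)`.
  nlinarith [sq_nonneg (√p * √(1 - p) - √q * √(1 - q))]

section DensityMatrix

variable {n : Type*} [Fintype n] [DecidableEq n] {ρ σ : Matrix n n ℂ}

theorem one_sub_traceNorm_sqrt_mul_sqrt_le (hρ : ρ.PosSemidef) (hρtr : ρ.trace = 1)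
    (hσ : σ.PosSemidef) (hσtr : σ.trace = 1) :
    1 - traceNorm (hρ.sqrt * hσ.sqrt) ≤ traceNorm (ρ - σ) / 2 := by
  have hPS := re_trace_sub_mul_sub_le_traceNorm hρ.posSemidef_sqrt hσ.posSemidef_sqrt
  rw [hρ.sqrt_mul_self, hσ.sqrt_mul_self] at hPS
  have hexp : ((hρ.sqrt - hσ.sqrt) * (hρ.sqrt - hσ.sqrt)).trace.re =
      2 - 2 * (hρ.sqrt * hσ.sqrt).trace.re := by
    rw [show (hρ.sqrt - hσ.sqrt) * (hρ.sqrt - hσ.sqrt) = hρ.sqrt * hρ.sqrt + hσ.sqrt * hσ.sqrt -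
        (hρ.sqrt * hσ.sqrt + hσ.sqrt * hρ.sqrt) by noncomm_ring,
      hρ.sqrt_mul_self, hσ.sqrt_mul_self, trace_sub, trace_add, trace_add, hρtr, hσtr,
      trace_mul_comm hσ.sqrt]
    simp only [Complex.sub_re, Complex.add_re, Complex.one_re]
    ring
  have hF := re_trace_unitary_mul_le_traceNorm (one_mem _) (hρ.sqrt * hσ.sqrt)
  rw [Matrix.one_mul] at hF
  linarith

theorem traceNorm_sub_div_two_le_sqrt_one_sub_sq (hρ : ρ.PosSemidef) (hρtr : ρ.trace = 1)
    (hσ : σ.PosSemidef) (hσtr : σ.trace = 1) :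
    traceNorm (ρ - σ) / 2 ≤ √(1 - traceNorm (hρ.sqrt * hσ.sqrt) ^ 2) := by
  obtain ⟨P, hP, hQ, hPD⟩ :=
    exists_projection_re_trace_mul_sub_eq hρ.1 hσ.1 (hρtr.trans hσtr.symm)
  set p := (P * ρ).trace.re
  set q := (P * σ).trace.re
  have hp : ((1 - P) * ρ).trace.re = 1 - p := by
    rw [Matrix.sub_mul, Matrix.one_mul, trace_sub, hρtr, Complex.sub_re, Complex.one_re]
  have hq : ((1 - P) * σ).trace.re = 1 - q := by
    rw [Matrix.sub_mul, Matrix.one_mul, trace_sub, hσtr, Complex.sub_re, Complex.one_re]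
  have hp₀ : 0 ≤ p := (Complex.nonneg_iff.mp (hP.trace_mul_nonneg hρ)).1
  have hq₀ : 0 ≤ q := (Complex.nonneg_iff.mp (hP.trace_mul_nonneg hσ)).1
  have hp₁ : 0 ≤ 1 - p := hp ▸ (Complex.nonneg_iff.mp (hQ.trace_mul_nonneg hρ)).1
  have hq₁ : 0 ≤ 1 - q := hq ▸ (Complex.nonneg_iff.mp (hQ.trace_mul_nonneg hσ)).1
  have hF := traceNorm_conjTranspose_mul_le (A := hρ.sqrt) (B := hσ.sqrt) hP hQ
    (add_sub_cancel P 1)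
  simp only [hρ.trace_sqrt_conjTranspose_mul_mul_sqrt, hσ.trace_sqrt_conjTranspose_mul_mul_sqrt,
    hp, hq] at hF
  rw [hρ.posSemidef_sqrt.1.eq] at hF
  have hF2 := pow_le_pow_left₀ (traceNorm_nonneg _) hF 2
  have hpq := sq_sqrt_mul_sqrt_add_sqrt_mul_sqrt_le hp₀ (by linarith) hq₀ (by linarith)
  apply Real.le_sqrt_of_sq_le
  rw [← hPD]
  linarith

end DensityMatrix

/-- Fuchs–van de Graaf and Bures–trace relations: with fidelity
`F(ρ,σ) = ‖√ρ √σ‖₁`, trace distance `Δ = ‖ρ−σ‖₁/2` and Bures metric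
`Δ_B = √(1 − F)`, one has `1 − F ≤ Δ ≤ √(1 − F²)` and
`Δ_B² ≤ Δ ≤ √2 · Δ_B`. -/
theorem fuchs_van_de_graaf {n : Type*} [Fintype n] [DecidableEq n]
    (ρ σ : Matrix n n ℂ)
    (hρ : ρ.PosSemidef) (hρtr : ρ.trace = 1)
    (hσ : σ.PosSemidef) (hσtr : σ.trace = 1) :
    1 - traceNorm (hρ.sqrt * hσ.sqrt) ≤ traceNorm (ρ - σ) / 2 ∧
    traceNorm (ρ - σ) / 2 ≤ Real.sqrt (1 - traceNorm (hρ.sqrt * hσ.sqrt) ^ 2) ∧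
    Real.sqrt (1 - traceNorm (hρ.sqrt * hσ.sqrt)) ^ 2 ≤ traceNorm (ρ - σ) / 2 ∧
    traceNorm (ρ - σ) / 2 ≤
      Real.sqrt 2 * Real.sqrt (1 - traceNorm (hρ.sqrt * hσ.sqrt)) := by
  set F := traceNorm (hρ.sqrt * hσ.sqrt)
  have hlower := one_sub_traceNorm_sqrt_mul_sqrt_le hρ hρtr hσ hσtr
  have hupper := traceNorm_sub_div_two_le_sqrt_one_sub_sq hρ hρtr hσ hσtr
  refine ⟨hlower, hupper, ?_, ?_⟩
  · rw [Real.sq_sqrt']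
    exact max_le hlower (div_nonneg (traceNorm_nonneg _) zero_le_two)
  · calc traceNorm (ρ - σ) / 2 ≤ √(1 - F ^ 2) := hupper
      _ ≤ √(2 * (1 - F)) := Real.sqrt_le_sqrt (by nlinarith [sq_nonneg (1 - F)])
      _ = √2 * √(1 - F) := Real.sqrt_mul zero_le_two _
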